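/- arXiv:0805.3476 — 6 statements merged into one kernel-verified Lean document; each statement's English description precedes it below -/
import Mathlib

section
/- The rank of a blown up matrix equals the rank of its pattern matrix: with B the blown up matrix of the a×b pattern matrix P using positive block sizes m_i, n_j, one has rank(B) = rank(P). -/
lemma rank_comp_le {a b m n : ℕ} (P : Matrix (Fin a) (Fin b) ℝ)
    (φ : Fin m → Fin a) (ψ : Fin n → Fin b)
    (B : Matrix (Fin m) (Fin n) ℝ)
    (hB : ∀ i j, B i j = P (φ i) (ψ j)) :
    B.rank ≤ P.rank := by
  classical
  have hEq : B = (Matrix.of fun i k => if φ i = k then (1:ℝ) else 0) * P *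
      (Matrix.of fun k j => if ψ j = k then (1:ℝ) else 0) := by
    ext i j
    simp [Matrix.mul_apply, hB, Finset.sum_ite_eq, Finset.sum_ite_eq']
  calc B.rank ≤ ((Matrix.of fun i k => if φ i = k then (1:ℝ) else 0) * P).rank := by
        rw [hEq]; exact Matrix.rank_mul_le_left _ _
    _ ≤ P.rank := Matrix.rank_mul_le_right _ _

/-- The rank of a blown up matrix equals the rank of its pattern matrix. -/
theorem stmt2 {a b m n : ℕ} (P : Matrix (Fin a) (Fin b) ℝ)
    (φ : Fin m → Fin a) (ψ : Fin n → Fin b)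
    (hφ : Function.Surjective φ) (hψ : Function.Surjective ψ)
    (B : Matrix (Fin m) (Fin n) ℝ)
    (hB : ∀ i j, B i j = P (φ i) (ψ j)) :
    B.rank = P.rank := by
  classical
  obtain ⟨g, hg⟩ := hφ.hasRightInverse
  obtain ⟨h, hh⟩ := hψ.hasRightInverse
  refine le_antisymm (rank_comp_le P φ ψ B hB) ?_
  exact rank_comp_le B g h P (fun k l => by rw [hB, hg k, hh l])
end

section
/- Singular vectors of a blown up matrix are piecewise constant: if B is the blown up matrix of pattern P with block sizes m_i, n_j, and (v,u) is a singular vector pair of B for a singular value s > 0 (i.e., Bu = s·v and Bᵀv = s·u with u,v unit vectors), then v is constant on each of the a row blocks and u is constant on each of the b column blocks. -/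
open Matrix

noncomputable def enorm' {m : ℕ} (v : Fin m → ℝ) : ℝ := Real.sqrt (∑ i, v i ^ 2)

section RowEq

variable {m n R : Type*} [Fintype n] [NonUnitalNonAssocSemiring R]

theorem Matrix.mulVec_apply_eq_of_row_eq {B : Matrix m n R} {i i' : m} (h : B i = B i')
    (u : n → R) : (B *ᵥ u) i = (B *ᵥ u) i' := by
  simp only [mulVec, h]

theorem Matrix.apply_eq_of_mulVec_eq_smul_of_row_eq [IsLeftCancelMulZero R]
    {B : Matrix m n R} {u : n → R} {v : m → R} {s : R} (hs : s ≠ 0) (hBuv : B *ᵥ u = s • v)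
    {i i' : m} (h : B i = B i') : v i = v i' := by
  have hrow := mulVec_apply_eq_of_row_eq h u
  rw [hBuv] at hrow
  exact mul_left_cancel₀ hs hrow

end RowEq

theorem stmt3_general {a b m n : ℕ} (P : Matrix (Fin a) (Fin b) ℝ)
    (φ : Fin m → Fin a) (ψ : Fin n → Fin b)
    (B : Matrix (Fin m) (Fin n) ℝ)
    (hB : ∀ i j, B i j = P (φ i) (ψ j))
    (s : ℝ) (hs : 0 < s) (v : Fin m → ℝ) (u : Fin n → ℝ)
    (h1 : B.mulVec u = s • v) (h2 : Bᵀ.mulVec v = s • u) :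
    (∀ i i', φ i = φ i' → v i = v i') ∧ (∀ j j', ψ j = ψ j' → u j = u j') := by
  refine ⟨fun i i' h => ?_, fun j j' h => ?_⟩
  · refine apply_eq_of_mulVec_eq_smul_of_row_eq hs.ne' h1 (funext fun j => ?_)
    rw [hB, hB, h]
  · refine apply_eq_of_mulVec_eq_smul_of_row_eq hs.ne' h2 (funext fun i => ?_)
    rw [transpose_apply, transpose_apply, hB, hB, h]

/-- Singular vectors of a blown up matrix corresponding to a positive singular value
are piecewise constant over the blocks. -/
theorem stmt3 {a b m n : ℕ} (P : Matrix (Fin a) (Fin b) ℝ)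
    (φ : Fin m → Fin a) (ψ : Fin n → Fin b)
    (hφ : Function.Surjective φ) (hψ : Function.Surjective ψ)
    (B : Matrix (Fin m) (Fin n) ℝ)
    (hB : ∀ i j, B i j = P (φ i) (ψ j))
    (s : ℝ) (hs : 0 < s) (v : Fin m → ℝ) (u : Fin n → ℝ)
    (hv : enorm' v = 1) (hu : enorm' u = 1)
    (h1 : B.mulVec u = s • v) (h2 : Bᵀ.mulVec v = s • u) :
    (∀ i i', φ i = φ i' → v i = v i') ∧ (∀ j j', ψ j = ψ j' → u j = u j') :=
  stmt3_general P φ ψ B hB s hs v u h1 h2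
end

section
/- Reduction of the SVD of a blown up matrix to a small matrix: the nonzero singular values of the m×n blown up matrix B of the a×b pattern matrix P (with block sizes m_i, n_j) coincide, with multiplicity, with the nonzero singular values of the a×b matrix D_m^{1/2} P D_n^{1/2}, where D_m = diag(m₁,...,m_a) and D_n = diag(n₁,...,n_b). -/
noncomputable def sval {m n : ℕ} (A : Matrix (Fin m) (Fin n) ℝ) (i : Fin n) : ℝ :=
  Real.sqrt ((Matrix.isHermitian_conjTranspose_mul_self A).eigenvalues
    (Tuple.sort (Matrix.isHermitian_conjTranspose_mul_self A).eigenvalues i.rev))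

/-!
Write `B = E P Fᵀ`, where `E`, `F` are the 0/1 matrices of `φ`, `ψ`; then `EᵀE = D_m` and
`FᵀF = D_n`. Since `XY` and `YX` have the same nonzero eigenvalues with multiplicity
(`X ^ |b| χ(XY) = X ^ |n| χ(YX)`), both `BᵀB = F (Pᵀ D_m P Fᵀ)` and
`QᵀQ = D_n^{1/2} (Pᵀ D_m P D_n^{1/2})` for `Q = D_m^{1/2} P D_n^{1/2}` share their nonzero
eigenvalues with `Pᵀ D_m P D_n`. Singular values are the square roots of these eigenvalues.
-/

open Polynomial Matrix

theorem Polynomial.filter_ne_zero_roots_X_pow_mul {R : Type*} [CommRing R] [IsDomain R]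
    [DecidableEq R] {p : R[X]} (hp : p ≠ 0) (k : ℕ) :
    (X ^ k * p).roots.filter (· ≠ 0) = p.roots.filter (· ≠ 0) := by
  rw [roots_mul (mul_ne_zero (pow_ne_zero k X_ne_zero) hp), roots_X_pow, Multiset.filter_add,
    Multiset.nsmul_singleton, Multiset.filter_eq_nil.mpr fun x hx => not_not.mpr
      (Multiset.eq_of_mem_replicate hx), zero_add]

namespace Matrix

variable {R : Type*} [CommRing R] {m n a b : Type*}

theorem transpose_one_submatrix_mul_one_submatrix [Fintype m] [DecidableEq a] (φ : m → a) :
    ((1 : Matrix a a R).submatrix φ id)ᵀ * (1 : Matrix a a R).submatrix φ id =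
      diagonal fun α => ((Finset.univ.filter fun i => φ i = α).card : R) := by
  ext α β
  simp only [mul_apply, transpose_apply, submatrix_apply, id, one_apply, diagonal_apply]
  split_ifs with h
  · subst h; simp [← ite_and, Finset.sum_boole]
  · refine Finset.sum_eq_zero fun i _ => ?_
    split_ifs with h1 h2 <;> simp_all

theorem submatrix_eq_one_submatrix_mul_mul [Fintype a] [Fintype b] [DecidableEq a]
    [DecidableEq b] (P : Matrix a b R) (φ : m → a) (ψ : n → b) :
    P.submatrix φ ψ =
      (1 : Matrix a a R).submatrix φ id * P * ((1 : Matrix b b R).submatrix ψ id)ᵀ := by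
  ext i j
  simp [mul_apply, one_apply]

theorem charpoly_transpose_submatrix_mul_submatrix [Fintype m] [Fintype n] [Fintype a]
    [Fintype b] [DecidableEq n] [DecidableEq a] [DecidableEq b]
    (P : Matrix a b R) (φ : m → a) (ψ : n → b) :
    X ^ Fintype.card b * ((P.submatrix φ ψ)ᵀ * P.submatrix φ ψ).charpoly =
      X ^ Fintype.card n *
        (Pᵀ * diagonal (fun α => ((Finset.univ.filter fun i => φ i = α).card : R)) * P *
          diagonal fun β => ((Finset.univ.filter fun j => ψ j = β).card : R)).charpoly := by
  set E := (1 : Matrix a a R).submatrix φ id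
  set F := (1 : Matrix b b R).submatrix ψ id
  have h : (P.submatrix φ ψ)ᵀ * P.submatrix φ ψ = F * (Pᵀ * (Eᵀ * E) * P * Fᵀ) := by
    simp only [submatrix_eq_one_submatrix_mul_mul P φ ψ, transpose_mul, transpose_transpose,
      Matrix.mul_assoc]
    rfl
  rw [h, charpoly_mul_comm', Matrix.mul_assoc _ Fᵀ, transpose_one_submatrix_mul_one_submatrix,
    transpose_one_submatrix_mul_one_submatrix]

theorem charpoly_transpose_diagonal_mul_mul_diagonal [Fintype a] [Fintype b] [DecidableEq a]
    [DecidableEq b] (s : a → R) (t : b → R) (P : Matrix a b R) :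
    ((diagonal s * P * diagonal t)ᵀ * (diagonal s * P * diagonal t)).charpoly =
      (Pᵀ * diagonal (s * s) * P * diagonal (t * t)).charpoly := by
  have h : (diagonal s * P * diagonal t)ᵀ * (diagonal s * P * diagonal t) =
      diagonal t * (Pᵀ * diagonal (s * s) * P * diagonal t) := by
    simp only [transpose_mul, diagonal_transpose, Matrix.mul_assoc]
    rw [← Matrix.mul_assoc (diagonal s) (diagonal s), diagonal_mul_diagonal]
    rfl
  rw [h, charpoly_mul_comm, Matrix.mul_assoc _ (diagonal t), diagonal_mul_diagonal]
  rfl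

end Matrix

theorem Real.filter_ne_zero_map_sqrt (s : Multiset ℝ) :
    (s.map Real.sqrt).filter (· ≠ 0) = ((s.filter (· ≠ 0)).filter (0 < ·)).map Real.sqrt := by
  rw [Multiset.filter_map, Multiset.filter_filter]
  congr 1
  exact Multiset.filter_congr fun x _ => by
    simp only [Function.comp_apply, Real.sqrt_ne_zero']
    exact ⟨fun hx => ⟨hx, hx.ne'⟩, And.left⟩

theorem univ_val_map_sval {k l : ℕ} (A : Matrix (Fin k) (Fin l) ℝ) :
    Finset.univ.val.map (sval A) = (Aᴴ * A).charpoly.roots.map Real.sqrt := by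
  set hA := isHermitian_conjTranspose_mul_self A
  have h : sval A =
      (Real.sqrt ∘ hA.eigenvalues) ∘ (Fin.revPerm.trans (Tuple.sort hA.eigenvalues)) := rfl
  rw [h, ← Multiset.map_map, Multiset.map_univ_val_equiv, hA.roots_charpoly_eq_eigenvalues,
    Multiset.map_map]
  rfl

theorem filter_ne_zero_map_sval_eq_of_charpoly {k l k' l' : ℕ} (A : Matrix (Fin k) (Fin l) ℝ)
    (A' : Matrix (Fin k') (Fin l') ℝ) (i j : ℕ)
    (h : X ^ i * (Aᴴ * A).charpoly = X ^ j * (A'ᴴ * A').charpoly) :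
    (Finset.univ.val.map (sval A)).filter (· ≠ 0) =
      (Finset.univ.val.map (sval A')).filter (· ≠ 0) := by
  have hroots : (Aᴴ * A).charpoly.roots.filter (· ≠ 0) =
      (A'ᴴ * A').charpoly.roots.filter (· ≠ 0) := by
    rw [← filter_ne_zero_roots_X_pow_mul (charpoly_monic _).ne_zero i, h,
      filter_ne_zero_roots_X_pow_mul (charpoly_monic _).ne_zero]
  rw [univ_val_map_sval, univ_val_map_sval, Real.filter_ne_zero_map_sqrt,
    Real.filter_ne_zero_map_sqrt, hroots]

theorem stmt4_general {a b m n : ℕ} (P : Matrix (Fin a) (Fin b) ℝ)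
    (φ : Fin m → Fin a) (ψ : Fin n → Fin b)
    (B : Matrix (Fin m) (Fin n) ℝ)
    (hB : ∀ i j, B i j = P (φ i) (ψ j)) :
    Multiset.filter (fun x => x ≠ 0)
        ((Finset.univ.val : Multiset (Fin n)).map (sval B)) =
    Multiset.filter (fun x => x ≠ 0)
        ((Finset.univ.val : Multiset (Fin b)).map
          (sval (Matrix.diagonal
              (fun i => Real.sqrt ((Finset.univ.filter (fun x => φ x = i)).card : ℝ)) * P *
            Matrix.diagonal
              (fun j => Real.sqrt ((Finset.univ.filter (fun x => ψ x = j)).card : ℝ))))) := by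
  have hB : B = P.submatrix φ ψ := Matrix.ext hB
  subst hB
  refine filter_ne_zero_map_sval_eq_of_charpoly _ _ b n ?_
  rw [conjTranspose_eq_transpose_of_trivial, conjTranspose_eq_transpose_of_trivial,
    charpoly_transpose_diagonal_mul_mul_diagonal]
  simpa [Pi.mul_def] using charpoly_transpose_submatrix_mul_submatrix (R := ℝ) P φ ψ

/-- The nonzero singular values of the blown up matrix `B` coincide, with multiplicity,
with the nonzero singular values of `D_m^{1/2} P D_n^{1/2}`. -/
theorem stmt4 {a b m n : ℕ} (P : Matrix (Fin a) (Fin b) ℝ)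
    (φ : Fin m → Fin a) (ψ : Fin n → Fin b)
    (hφ : Function.Surjective φ) (hψ : Function.Surjective ψ)
    (B : Matrix (Fin m) (Fin n) ℝ)
    (hB : ∀ i j, B i j = P (φ i) (ψ j)) :
    Multiset.filter (fun x => x ≠ 0)
        ((Finset.univ.val : Multiset (Fin n)).map (sval B)) =
    Multiset.filter (fun x => x ≠ 0)
        ((Finset.univ.val : Multiset (Fin b)).map
          (sval (Matrix.diagonal
              (fun i => Real.sqrt ((Finset.univ.filter (fun x => φ x = i)).card : ℝ)) * P *
            Matrix.diagonal
              (fun j => Real.sqrt ((Finset.univ.filter (fun x => ψ x = j)).card : ℝ))))) :=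
  stmt4_general P φ ψ B hB
end

section
/- Order of nonzero singular values of a blown up matrix under the growth condition: suppose P is a fixed a×b pattern matrix with rank r, and B is its m×n blown up matrix with block sizes satisfying m_i/m ≥ c and n_j/n ≥ d for fixed constants c,d ∈ (0,1). Then there exist constants 0 < c₁ ≤ c₂ (depending only on P, c, d) such that every nonzero singular value s of B satisfies c₁√(mn) ≤ s ≤ c₂√(mn). -/
open Finset Matrix

theorem Matrix.dotProduct_sq_le_dotProduct_self_mul {ι : Type*} [Fintype ι] (x y : ι → ℝ) :
    (x ⬝ᵥ y) ^ 2 ≤ (x ⬝ᵥ x) * (y ⬝ᵥ y) := by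
  simpa only [dotProduct, sq] using sum_mul_sq_le_sq_mul_sq univ x y

theorem Matrix.mulVec_dotProduct_self {ι κ : Type*} [Fintype ι] [Fintype κ]
    (A : Matrix ι κ ℝ) (x : κ → ℝ) :
    A *ᵥ x ⬝ᵥ A *ᵥ x = x ⬝ᵥ (Aᵀ * A) *ᵥ x := by
  rw [← mulVec_mulVec, dotProduct_mulVec, ← mulVec_transpose, dotProduct_comm]

theorem Matrix.mul_dotProduct_self_le_dotProduct_diagonal_mulVec {κ : Type*} [Fintype κ]
    [DecidableEq κ] {w : κ → ℝ} {δ : ℝ} (hw : ∀ i, δ ≤ w i) (x : κ → ℝ) :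
    δ * (x ⬝ᵥ x) ≤ x ⬝ᵥ diagonal w *ᵥ x := by
  simp only [dotProduct, mulVec_diagonal, mul_sum]
  exact sum_le_sum fun i _ => by nlinarith [hw i, mul_self_nonneg (x i)]

theorem Matrix.mulVec_dotProduct_self_le {ι κ : Type*} [Fintype ι] [Fintype κ]
    (A : Matrix ι κ ℝ) (x : κ → ℝ) :
    A *ᵥ x ⬝ᵥ A *ᵥ x ≤ (∑ i, ∑ j, A i j ^ 2) * (x ⬝ᵥ x) := by
  rw [sum_mul]
  refine sum_le_sum fun i _ => ?_
  have := dotProduct_sq_le_dotProduct_self_mul (A i) x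
  simpa only [mulVec, ← sq, dotProduct] using this

theorem LinearMap.exists_preimage_norm_le_mul_norm {𝕜 E F : Type*} [NontriviallyNormedField 𝕜]
    [CompleteSpace 𝕜] [NormedAddCommGroup E] [NormedSpace 𝕜 E] [FiniteDimensional 𝕜 E]
    [NormedAddCommGroup F] [NormedSpace 𝕜 F] (f : E →ₗ[𝕜] F) :
    ∃ C > 0, ∀ x, ∃ x', f x' = f x ∧ ‖x'‖ ≤ C * ‖f x‖ := by
  have := FiniteDimensional.complete 𝕜 E
  have := FiniteDimensional.complete 𝕜 (LinearMap.range f)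
  obtain ⟨C, hC, hpre⟩ :=
    (LinearMap.toContinuousLinearMap f.rangeRestrict).exists_preimage_norm_le
      f.surjective_rangeRestrict
  refine ⟨C, hC, fun x => ?_⟩
  obtain ⟨x', hx', hle⟩ := hpre (f.rangeRestrict x)
  exact ⟨x', congrArg Subtype.val hx', hle⟩

theorem EuclideanSpace.norm_toLp_sq {ι : Type*} [Fintype ι] (x : ι → ℝ) :
    ‖WithLp.toLp 2 x‖ ^ 2 = x ⬝ᵥ x := by
  rw [EuclideanSpace.real_norm_sq_eq]
  simp [dotProduct, sq]

theorem Matrix.exists_preimage_dotProduct_self_le {ι κ : Type*} [Fintype ι] [Fintype κ]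
    (A : Matrix ι κ ℝ) :
    ∃ C > 0, ∀ x, ∃ x', A *ᵥ x' = A *ᵥ x ∧ x' ⬝ᵥ x' ≤ C * (A *ᵥ x ⬝ᵥ A *ᵥ x) := by
  classical
  obtain ⟨C, hC, hpre⟩ := (toEuclideanLin A).exists_preimage_norm_le_mul_norm
  refine ⟨C ^ 2, by positivity, fun x => ?_⟩
  obtain ⟨x', hx', hle⟩ := hpre (WithLp.toLp 2 x)
  simp only [toLpLin_apply] at hx' hle
  refine ⟨x'.ofLp, by simpa using congrArg WithLp.ofLp hx', ?_⟩
  have := pow_le_pow_left₀ (norm_nonneg _) hle 2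
  rwa [mul_pow, EuclideanSpace.norm_toLp_sq, EuclideanSpace.norm_toLp_sq] at this

theorem Matrix.exists_transpose_mulVec_dotProduct_sq_le {ι κ : Type*} [Fintype ι]
    [Fintype κ] (P : Matrix ι κ ℝ) :
    ∃ C > 0, ∀ z g, (Pᵀ *ᵥ z ⬝ᵥ g) ^ 2 ≤ C * (Pᵀ *ᵥ z ⬝ᵥ Pᵀ *ᵥ z) * (P *ᵥ g ⬝ᵥ P *ᵥ g) := by
  obtain ⟨C, hC, hpre⟩ := Pᵀ.exists_preimage_dotProduct_self_le
  refine ⟨C, hC, fun z g => ?_⟩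
  obtain ⟨z', hz', hle⟩ := hpre z
  calc (Pᵀ *ᵥ z ⬝ᵥ g) ^ 2 = (z' ⬝ᵥ P *ᵥ g) ^ 2 := by
        rw [← hz', mulVec_transpose, dotProduct_mulVec]
    _ ≤ (z' ⬝ᵥ z') * (P *ᵥ g ⬝ᵥ P *ᵥ g) := dotProduct_sq_le_dotProduct_self_mul _ _
    _ ≤ C * (Pᵀ *ᵥ z ⬝ᵥ Pᵀ *ᵥ z) * (P *ᵥ g ⬝ᵥ P *ᵥ g) :=
        mul_le_mul_of_nonneg_right hle (dotProduct_self_star_nonneg _)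

theorem Matrix.mul_dotProduct_diagonal_mulVec_le {α β : Type*} [Fintype α] [Fintype β]
    [DecidableEq β] {P : Matrix α β ℝ} {C δ : ℝ} (hC₀ : 0 ≤ C) (hδ : 0 ≤ δ)
    (hC : ∀ z g, (Pᵀ *ᵥ z ⬝ᵥ g) ^ 2 ≤ C * (Pᵀ *ᵥ z ⬝ᵥ Pᵀ *ᵥ z) * (P *ᵥ g ⬝ᵥ P *ᵥ g))
    {w : β → ℝ} (hw : ∀ t, δ ≤ w t) (z : α → ℝ) :
    δ * (Pᵀ *ᵥ z ⬝ᵥ diagonal w *ᵥ Pᵀ *ᵥ z) ≤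
      C * (P *ᵥ diagonal w *ᵥ Pᵀ *ᵥ z ⬝ᵥ P *ᵥ diagonal w *ᵥ Pᵀ *ᵥ z) := by
  set u := Pᵀ *ᵥ z
  set g := P *ᵥ diagonal w *ᵥ u
  set V := u ⬝ᵥ diagonal w *ᵥ u
  have hkey : V ^ 2 ≤ C * (u ⬝ᵥ u) * (g ⬝ᵥ g) := hC z (diagonal w *ᵥ u)
  have hu : δ * (u ⬝ᵥ u) ≤ V := mul_dotProduct_self_le_dotProduct_diagonal_mulVec hw u
  have hU : 0 ≤ u ⬝ᵥ u := dotProduct_self_star_nonneg u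
  have hG : 0 ≤ g ⬝ᵥ g := dotProduct_self_star_nonneg g
  rcases (le_trans (by positivity) hu : 0 ≤ V).eq_or_lt with hV0 | hVpos
  · rw [← hV0, mul_zero]; positivity
  · refine le_of_mul_le_mul_right ?_ hVpos
    calc δ * V * V = δ * V ^ 2 := by ring
      _ ≤ δ * (C * (u ⬝ᵥ u) * (g ⬝ᵥ g)) := by gcongr
      _ = C * (g ⬝ᵥ g) * (δ * (u ⬝ᵥ u)) := by ring
      _ ≤ C * (g ⬝ᵥ g) * V := by gcongr

def Matrix.blockIndicator {ι α : Type*} [DecidableEq α] (φ : ι → α) : Matrix ι α ℝ :=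
  of fun x r => if φ x = r then 1 else 0

theorem Matrix.eq_blockIndicator_mul_mul_transpose {ι κ α β : Type*} [Fintype α] [Fintype β]
    [DecidableEq α] [DecidableEq β] {B : Matrix ι κ ℝ} {P : Matrix α β ℝ}
    {φ : ι → α} {ψ : κ → β} (hB : ∀ i j, B i j = P (φ i) (ψ j)) :
    B = blockIndicator φ * P * (blockIndicator ψ)ᵀ := by
  ext x j
  simp [hB, blockIndicator, mul_apply]

theorem Matrix.blockIndicator_transpose_mul_self {ι α : Type*} [Fintype ι] [DecidableEq α]
    (φ : ι → α) :
    (blockIndicator φ)ᵀ * blockIndicator φ =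
      diagonal fun r => ((univ.filter fun x => φ x = r).card : ℝ) := by
  ext r t
  simp only [blockIndicator, transpose_apply, of_apply, mul_apply, boole_mul, ← ite_and,
    sum_boole, diagonal_apply]
  split_ifs with h
  · simp [h]
  · simp only [Nat.cast_eq_zero, card_eq_zero, filter_eq_empty_iff]
    rintro x - ⟨rfl, rfl⟩
    exact h rfl

theorem Matrix.mul_dotProduct_self_le_blowUp_mulVec_dotProduct_self {ι κ α β : Type*}
    [Fintype ι] [Fintype κ] [Fintype α] [Fintype β] [DecidableEq α] [DecidableEq β] {B : Matrix ι κ ℝ} {P : Matrix α β ℝ} {φ : ι → α} {ψ : κ → β}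
    (hB : ∀ i j, B i j = P (φ i) (ψ j)) {C c d : ℝ} (hC₀ : 0 < C) (hc : 0 ≤ c) (hd : 0 ≤ d)
    (hC : ∀ z g, (Pᵀ *ᵥ z ⬝ᵥ g) ^ 2 ≤ C * (Pᵀ *ᵥ z ⬝ᵥ Pᵀ *ᵥ z) * (P *ᵥ g ⬝ᵥ P *ᵥ g))
    (hφ : ∀ r, c * Fintype.card ι ≤ ((univ.filter fun x => φ x = r).card : ℝ))
    (hψ : ∀ t, d * Fintype.card κ ≤ ((univ.filter fun x => ψ x = t).card : ℝ)) (y : ι → ℝ) :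
    c * d / C * (Fintype.card ι * Fintype.card κ) * (Bᵀ *ᵥ y ⬝ᵥ Bᵀ *ᵥ y) ≤
      B *ᵥ Bᵀ *ᵥ y ⬝ᵥ B *ᵥ Bᵀ *ᵥ y := by
  have hB' := eq_blockIndicator_mul_mul_transpose hB
  have hΨ := mul_dotProduct_diagonal_mulVec_le hC₀.le (by positivity) hC hψ
    ((blockIndicator φ)ᵀ *ᵥ y)
  have hΦ := mul_dotProduct_self_le_dotProduct_diagonal_mulVec hφ
    (P *ᵥ ((blockIndicator ψ)ᵀ * blockIndicator ψ) *ᵥ Pᵀ *ᵥ (blockIndicator φ)ᵀ *ᵥ y)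
  rw [← blockIndicator_transpose_mul_self] at hΨ hΦ
  set Φ := blockIndicator φ
  set Ψ := blockIndicator ψ
  set u := Pᵀ *ᵥ Φᵀ *ᵥ y
  set g := P *ᵥ (Ψᵀ * Ψ) *ᵥ u
  have hv : Bᵀ *ᵥ y = Ψ *ᵥ u := by
    simp only [hB', transpose_mul, transpose_transpose, u, mulVec_mulVec, Matrix.mul_assoc]
  have hBv : B *ᵥ Ψ *ᵥ u = Φ *ᵥ g := by
    simp only [hB', g, mulVec_mulVec, Matrix.mul_assoc]
  rw [hv, hBv, mulVec_dotProduct_self Ψ, mulVec_dotProduct_self Φ, div_mul_eq_mul_div,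
    div_mul_eq_mul_div, div_le_iff₀' hC₀]
  calc c * d * (Fintype.card ι * Fintype.card κ) * (u ⬝ᵥ (Ψᵀ * Ψ) *ᵥ u)
      = c * Fintype.card ι * (d * Fintype.card κ * (u ⬝ᵥ (Ψᵀ * Ψ) *ᵥ u)) := by ring
    _ ≤ c * Fintype.card ι * (C * (g ⬝ᵥ g)) := by gcongr
    _ = C * (c * Fintype.card ι * (g ⬝ᵥ g)) := by ring
    _ ≤ C * (g ⬝ᵥ (Φᵀ * Φ) *ᵥ g) := by gcongr

theorem Matrix.sum_sq_blowUp_le {ι κ α β : Type*} [Fintype ι] [Fintype κ] [Fintype α]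
    [Fintype β] {B : Matrix ι κ ℝ} {P : Matrix α β ℝ} {φ : ι → α} {ψ : κ → β}
    (hB : ∀ i j, B i j = P (φ i) (ψ j)) :
    ∑ i, ∑ j, B i j ^ 2 ≤ Fintype.card ι * Fintype.card κ * ∑ r, ∑ t, P r t ^ 2 := by
  have hentry : ∀ i j, B i j ^ 2 ≤ ∑ r, ∑ t, P r t ^ 2 := fun i j =>
    calc B i j ^ 2 = P (φ i) (ψ j) ^ 2 := by rw [hB]
      _ ≤ ∑ t, P (φ i) t ^ 2 :=
          single_le_sum (f := fun t => P (φ i) t ^ 2) (fun _ _ => sq_nonneg _) (mem_univ _)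
      _ ≤ ∑ r, ∑ t, P r t ^ 2 :=
          single_le_sum (f := fun r => ∑ t, P r t ^ 2) (fun _ _ => by positivity) (mem_univ _)
  calc ∑ i, ∑ j, B i j ^ 2 ≤ ∑ _i : ι, ∑ _j : κ, ∑ r, ∑ t, P r t ^ 2 :=
        sum_le_sum fun i _ => sum_le_sum fun j _ => hentry i j
    _ = _ := by simp [mul_assoc]

theorem exists_eigenvector_of_sval_ne_zero {m n : ℕ} (B : Matrix (Fin m) (Fin n) ℝ) {k : Fin n}
    (hk : sval B k ≠ 0) :
    ∃ y, Bᵀ *ᵥ y ≠ 0 ∧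
      sval B k ^ 2 * (Bᵀ *ᵥ y ⬝ᵥ Bᵀ *ᵥ y) = B *ᵥ Bᵀ *ᵥ y ⬝ᵥ B *ᵥ Bᵀ *ᵥ y := by
  set hH := isHermitian_conjTranspose_mul_self B
  set i := Tuple.sort hH.eigenvalues k.rev
  set μ := hH.eigenvalues i
  set v : Fin n → ℝ := ⇑(hH.eigenvectorBasis i)
  have hsval : sval B k = √μ := rfl
  have hs : sval B k ^ 2 = μ := by
    rw [hsval, Real.sq_sqrt (eigenvalues_conjTranspose_mul_self_nonneg B i)]
  have hμ : μ ≠ 0 := fun h => hk (by rw [hsval, h, Real.sqrt_zero])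
  have hev : (Bᵀ * B) *ᵥ v = μ • v := by
    rw [← conjTranspose_eq_transpose_of_trivial]
    exact hH.mulVec_eigenvectorBasis i
  have hv : Bᵀ *ᵥ (μ⁻¹ • B *ᵥ v) = v := by
    rw [mulVec_smul, mulVec_mulVec, hev, smul_smul, inv_mul_cancel₀ hμ, one_smul]
  refine ⟨μ⁻¹ • B *ᵥ v, ?_, ?_⟩ <;> rw [hv]
  · exact fun h0 => hH.eigenvectorBasis.orthonormal.ne_zero i (by ext j; exact congrFun h0 j)
  · rw [mulVec_dotProduct_self, hev, dotProduct_smul, hs, smul_eq_mul]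

theorem sqrt_le_sval_and_sval_le_sqrt {m n : ℕ} (B : Matrix (Fin m) (Fin n) ℝ) {α β : ℝ}
    (hlow : ∀ y, α * (Bᵀ *ᵥ y ⬝ᵥ Bᵀ *ᵥ y) ≤ B *ᵥ Bᵀ *ᵥ y ⬝ᵥ B *ᵥ Bᵀ *ᵥ y)
    (hup : ∀ x, B *ᵥ x ⬝ᵥ B *ᵥ x ≤ β * (x ⬝ᵥ x)) {k : Fin n} (hk : sval B k ≠ 0) :
    √α ≤ sval B k ∧ sval B k ≤ √β := by
  obtain ⟨y, hv, hs⟩ := exists_eigenvector_of_sval_ne_zero B hk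
  have hpos : 0 < Bᵀ *ᵥ y ⬝ᵥ Bᵀ *ᵥ y :=
    (dotProduct_self_star_nonneg _).lt_of_ne' (dotProduct_self_eq_zero.not.2 hv)
  have hs₀ : 0 ≤ sval B k := Real.sqrt_nonneg _
  rw [← Real.sqrt_sq hs₀]
  constructor
  · exact Real.sqrt_le_sqrt (le_of_mul_le_mul_right ((hlow y).trans_eq hs.symm) hpos)
  · exact Real.sqrt_le_sqrt (le_of_mul_le_mul_right (hs.trans_le (hup _)) hpos)

/-- Under the growth condition GC1, every nonzero singular value of the blown up matrix
of a fixed pattern matrix `P` is of order `√(mn)`, with constants depending only on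
`P`, `c`, `d`. -/
theorem stmt7 {a b : ℕ} (P : Matrix (Fin a) (Fin b) ℝ) (c d : ℝ)
    (hc : c ∈ Set.Ioo (0:ℝ) 1) (hd : d ∈ Set.Ioo (0:ℝ) 1) :
    ∃ c₁ c₂ : ℝ, 0 < c₁ ∧ c₁ ≤ c₂ ∧
      ∀ (m n : ℕ) (φ : Fin m → Fin a) (ψ : Fin n → Fin b)
        (B : Matrix (Fin m) (Fin n) ℝ),
        (∀ i j, B i j = P (φ i) (ψ j)) →
        (∀ i : Fin a, c * (m : ℝ) ≤ ((Finset.univ.filter (fun x => φ x = i)).card : ℝ)) →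
        (∀ j : Fin b, d * (n : ℝ) ≤ ((Finset.univ.filter (fun x => ψ x = j)).card : ℝ)) →
        ∀ k : Fin n, sval B k ≠ 0 →
          c₁ * Real.sqrt ((m : ℝ) * n) ≤ sval B k ∧
          sval B k ≤ c₂ * Real.sqrt ((m : ℝ) * n) := by
  obtain ⟨C, hC₀, hC⟩ := P.exists_transpose_mulVec_dotProduct_sq_le
  set T := ∑ r, ∑ t, P r t ^ 2
  have hcd : 0 < c * d / C := by have := hc.1; have := hd.1; positivity
  refine ⟨√(c * d / C), √(c * d / C) + √T, Real.sqrt_pos.2 hcd,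
    le_add_of_nonneg_right (Real.sqrt_nonneg T), ?_⟩
  intro m n φ ψ B hB hφ hψ k hk
  have hlow := mul_dotProduct_self_le_blowUp_mulVec_dotProduct_self hB hC₀ hc.1.le hd.1.le hC
    (by simpa using hφ) (by simpa using hψ)
  have hup (x : Fin n → ℝ) := (mulVec_dotProduct_self_le B x).trans <|
    mul_le_mul_of_nonneg_right (sum_sq_blowUp_le hB) (dotProduct_self_star_nonneg x)
  simp only [Fintype.card_fin] at hlow hup
  obtain ⟨hs_low, hs_up⟩ := sqrt_le_sval_and_sval_le_sqrt _ hlow hup hk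
  rw [Real.sqrt_mul hcd.le] at hs_low
  rw [Real.sqrt_mul (by positivity), mul_comm] at hs_up
  exact ⟨hs_low, hs_up.trans <| mul_le_mul_of_nonneg_right
    (le_add_of_nonneg_left (Real.sqrt_nonneg _)) (Real.sqrt_nonneg _)⟩
end

section
/- The k-variance of piecewise constant approximations bounds the clustering quality: let y¹,...,y^m ∈ ℝ^r be the rows of the m×r matrix Y whose columns are unit vectors y₁,...,y_r ∈ ℝ^m, let {A₁,...,A_a} be a partition of {1,...,m}, and let F be the subspace of vectors in ℝ^m constant on each A_i. Then the a-variance S_a²(Y) := min over a-partitions of Σ_i Σ_{j∈A'_i} ‖y^j − ȳ^i‖² (ȳ^i the mean of the representatives over A'_i) satisfies S_a²(Y) ≤ Σ_{i=1}^r dist²(y_i, F). -/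
noncomputable def enormR {m : ℕ} (v : Fin m → ℝ) : ℝ := Real.sqrt (∑ i, v i ^ 2)

/-- Euclidean distance from a vector to a subspace of `ℝ^m`. -/
noncomputable def distSub {m : ℕ} (y : Fin m → ℝ) (F : Submodule ℝ (Fin m → ℝ)) : ℝ :=
  ⨅ f : F, enormR (y - (f : Fin m → ℝ))

/-- The subspace of vectors of `ℝ^m` that are constant on each block of the
partition induced by `φ`. -/
def constOn {m a : ℕ} (φ : Fin m → Fin a) : Submodule ℝ (Fin m → ℝ) where
  carrier := {w | ∀ j j', φ j = φ j' → w j = w j'}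
  add_mem' := by
    intro w1 w2 h1 h2 j j' hj
    simp [h1 j j' hj, h2 j j' hj]
  zero_mem' := by intro j j' hj; rfl
  smul_mem' := by
    intro c w h j j' hj
    simp [h j j' hj]

/-- The cost of a clustering `ψ` of the representatives `rep`. -/
noncomputable def clusterCost {m a r : ℕ} (rep : Fin m → Fin r → ℝ)
    (ψ : Fin m → Fin a) : ℝ :=
  ∑ j, (enormR (rep j - fun kk =>
      (∑ j' ∈ Finset.univ.filter (fun x => ψ x = ψ j), rep j' kk) /
        ((Finset.univ.filter (fun x => ψ x = ψ j)).card : ℝ))) ^ 2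

/-! Take the clustering given by the partition `φ` itself. Coordinatewise, its cost is the
sum over the columns `y_k` of the squared distances from `y_k` to its blockwise means, and the
blockwise mean is the best vector constant on blocks, since on each block the mean minimises
the sum of squared deviations. -/

open Finset

lemma enormR_sq {m : ℕ} (v : Fin m → ℝ) : enormR v ^ 2 = ∑ i, v i ^ 2 :=
  Real.sq_sqrt (sum_nonneg fun _ _ => sq_nonneg _)

lemma le_distSub_sq {m : ℕ} {y : Fin m → ℝ} {F : Submodule ℝ (Fin m → ℝ)} {T : ℝ}
    (hT₀ : 0 ≤ T) (hT : ∀ f ∈ F, T ≤ ∑ j, (y j - f j) ^ 2) : T ≤ distSub y F ^ 2 := by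
  have hdist : √T ≤ distSub y F :=
    le_ciInf fun f => Real.sqrt_le_sqrt (by simpa using hT f f.2)
  simpa [Real.sq_sqrt hT₀] using pow_le_pow_left₀ (Real.sqrt_nonneg T) hdist 2

lemma sum_sq_sub_mean_le {ι : Type*} (s : Finset ι) (v : ι → ℝ) (t : ℝ) :
    ∑ j ∈ s, (v j - (∑ j' ∈ s, v j') / #s) ^ 2 ≤ ∑ j ∈ s, (v j - t) ^ 2 := by
  rcases s.eq_empty_or_nonempty with rfl | hs
  · simp
  have hn : (0 : ℝ) < #s := by exact_mod_cast hs.card_pos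
  set μ := (∑ j' ∈ s, v j') / #s
  have hsum : ∑ j ∈ s, v j = #s * μ := by simp only [μ]; field_simp
  -- Expanding, `∑ (v j - c)²` exceeds its value at `c = μ` by exactly `#s (c - μ)²`.
  have expand : ∀ c : ℝ, ∑ j ∈ s, (v j - c) ^ 2
      = ∑ j ∈ s, v j ^ 2 - 2 * c * ∑ j ∈ s, v j + #s * c ^ 2 := by
    intro c
    simp only [sub_sq, sum_add_distrib, sum_sub_distrib, sum_const, nsmul_eq_mul, ← sum_mul,
      ← mul_sum]
    ring
  rw [expand, expand, hsum]
  nlinarith [mul_nonneg hn.le (sq_nonneg (t - μ))]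

section BlockMean

variable {ι κ : Type*} [Fintype ι] [DecidableEq κ]

noncomputable def blockMean (φ : ι → κ) (v : ι → ℝ) (j : ι) : ℝ :=
  (∑ j' ∈ univ.filter (fun x => φ x = φ j), v j') / #(univ.filter fun x => φ x = φ j)

lemma sum_sq_sub_blockMean_le [Fintype κ] (φ : ι → κ) (v f : ι → ℝ)
    (hf : ∀ j j', φ j = φ j' → f j = f j') :
    ∑ j, (v j - blockMean φ v j) ^ 2 ≤ ∑ j, (v j - f j) ^ 2 := by
  rw [← sum_fiberwise univ φ, ← sum_fiberwise univ φ]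
  refine sum_le_sum fun c _ => ?_
  rcases (univ.filter fun x => φ x = c).eq_empty_or_nonempty with hempty | ⟨j₀, hj₀⟩
  · simp [hempty]
  have hj₀c : φ j₀ = c := (mem_filter.mp hj₀).2
  calc ∑ j ∈ univ.filter (fun x => φ x = c), (v j - blockMean φ v j) ^ 2
      = ∑ j ∈ univ.filter (fun x => φ x = c),
          (v j - (∑ j' ∈ univ.filter (fun x => φ x = c), v j') /
            #(univ.filter fun x => φ x = c)) ^ 2 :=
        sum_congr rfl fun j hj => by rw [blockMean, (mem_filter.mp hj).2]
    _ ≤ ∑ j ∈ univ.filter (fun x => φ x = c), (v j - f j₀) ^ 2 := sum_sq_sub_mean_le _ _ _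
    _ = ∑ j ∈ univ.filter (fun x => φ x = c), (v j - f j) ^ 2 :=
        sum_congr rfl fun j hj => by rw [hf j j₀ ((mem_filter.mp hj).2.trans hj₀c.symm)]

end BlockMean

lemma clusterCost_eq_sum_blockMean {m a r : ℕ} (rep : Fin m → Fin r → ℝ) (ψ : Fin m → Fin a) :
    clusterCost rep ψ = ∑ k, ∑ j, (rep j k - blockMean ψ (fun j => rep j k) j) ^ 2 := by
  rw [clusterCost, sum_comm]
  refine sum_congr rfl fun j _ => ?_
  rw [enormR_sq]
  rfl

theorem stmt11_general {m a r : ℕ} (y : Fin r → Fin m → ℝ)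
    (φ : Fin m → Fin a) :
    (⨅ ψ : Fin m → Fin a, clusterCost (fun j k => y k j) ψ) ≤
      ∑ i, (distSub (y i) (constOn φ)) ^ 2 := by
  have hbdd : BddBelow (Set.range fun ψ : Fin m → Fin a => clusterCost (fun j k => y k j) ψ) :=
    ⟨0, by rintro _ ⟨ψ, rfl⟩; exact sum_nonneg fun j _ => sq_nonneg _⟩
  refine (ciInf_le hbdd φ).trans ?_
  rw [clusterCost_eq_sum_blockMean]
  exact sum_le_sum fun k _ => le_distSub_sq (sum_nonneg fun j _ => sq_nonneg _)
    fun f hf => sum_sq_sub_blockMean_le φ (y k) f hf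

/-- The `a`-variance (minimum clustering cost over all `a`-partitions) of the row
representatives of `Y` is bounded by `Σ_i dist²(y_i, F)`, where `F` is the
subspace of vectors constant on each block of the partition `φ`. -/
theorem stmt11 {m a r : ℕ} [NeZero a] (y : Fin r → Fin m → ℝ)
    (hunit : ∀ i, enormR (y i) = 1)
    (φ : Fin m → Fin a) (hφ : Function.Surjective φ) :
    (⨅ ψ : Fin m → Fin a, clusterCost (fun j k => y k j) ψ) ≤
      ∑ i, (distSub (y i) (constOn φ)) ^ 2 :=
  stmt11_general y φ
end

section
/- Structure recognition decomposition: let A be an m×n real matrix with singular value decomposition A = Σ z_i y_i x_iᵀ. Suppose for the top k singular triples there are orthonormal vectors v₁,...,v_k ∈ ℝ^m and u₁,...,u_k ∈ ℝ^n with Σ_{i=1}^k ‖y_i − v_i‖² ≤ ρ² and Σ_{i=1}^k ‖x_i − u_i‖² ≤ ρ². Set B = Σ_{i=1}^k z_i v_i u_iᵀ. Then ‖A − B‖ ≤ z_{k+1} + z₁·(2ρ + ρ²), where z₁ ≥ ... are the singular values of A (z_{k+1} := 0 if k = min(m,n)). -/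
/-!
On the top `k` indices write `yᵢ xᵢᵀ - vᵢ uᵢᵀ = (yᵢ - vᵢ) xᵢᵀ + vᵢ (xᵢ - uᵢ)ᵀ`, so `A - B` is the
tail `∑_{i ≥ k} zᵢ yᵢ xᵢᵀ` plus two error sums. Each piece is an operator
`w ↦ ∑ cᵢ ⟪gᵢ, w⟫ fᵢ`, whose norm is at most `max |cᵢ|` times the Bessel constants of `f` and `g`:
`1` for an orthonormal family and, by Cauchy–Schwarz, `ρ` for a family with `∑ ‖·‖² ≤ ρ²`.
The three pieces contribute `z_{k+1}`, `z₁ ρ` and `z₁ ρ`; this splitting has no `ρ²` cross term,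
so the bound obtained is `z_{k+1} + 2 z₁ ρ`.
-/

noncomputable def euclNorm {m : ℕ} (v : Fin m → ℝ) : ℝ := Real.sqrt (∑ i, v i ^ 2)

noncomputable def specNorm {m n : ℕ} (A : Matrix (Fin m) (Fin n) ℝ) : ℝ :=
  ‖(LinearMap.toContinuousLinearMap (Matrix.toEuclideanLin A))‖

open Finset WithLp
open scoped RealInnerProductSpace Matrix

section RankOneSums

variable {ι κ E F : Type*} [NormedAddCommGroup E] [InnerProductSpace ℝ E]
  [NormedAddCommGroup F] [InnerProductSpace ℝ F] {s : Finset ι}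

theorem Orthonormal.norm_sum_smul_sq {f : ι → E} (hf : Orthonormal ℝ f) (a : ι → ℝ) :
    ‖∑ i ∈ s, a i • f i‖ ^ 2 = ∑ i ∈ s, a i ^ 2 := by
  rw [← real_inner_self_eq_norm_sq, hf.inner_sum]
  simp only [conj_trivial, sq]

theorem norm_sum_smul_sq_le (f : ι → E) (a : ι → ℝ) :
    ‖∑ i ∈ s, a i • f i‖ ^ 2 ≤ (∑ i ∈ s, ‖f i‖ ^ 2) * ∑ i ∈ s, a i ^ 2 := by
  calc ‖∑ i ∈ s, a i • f i‖ ^ 2 ≤ (∑ i ∈ s, ‖f i‖ * |a i|) ^ 2 := by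
        gcongr
        refine (norm_sum_le _ _).trans_eq (sum_congr rfl fun i _ => ?_)
        rw [norm_smul, Real.norm_eq_abs, mul_comm]
    _ ≤ (∑ i ∈ s, ‖f i‖ ^ 2) * ∑ i ∈ s, |a i| ^ 2 := sum_mul_sq_le_sq_mul_sq _ _ _
    _ = (∑ i ∈ s, ‖f i‖ ^ 2) * ∑ i ∈ s, a i ^ 2 := by simp only [sq_abs]

theorem Orthonormal.sum_inner_sq_le {g : ι → F} (hg : Orthonormal ℝ g) (w : F) :
    ∑ i ∈ s, ⟪g i, w⟫ ^ 2 ≤ ‖w‖ ^ 2 := by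
  simpa only [Real.norm_eq_abs, sq_abs] using hg.sum_inner_products_le (s := s) w

theorem sum_inner_sq_le (g : ι → F) (w : F) :
    ∑ i ∈ s, ⟪g i, w⟫ ^ 2 ≤ (∑ i ∈ s, ‖g i‖ ^ 2) * ‖w‖ ^ 2 := by
  rw [sum_mul]
  gcongr with i
  rw [← mul_pow, ← sq_abs]
  exact pow_le_pow_left₀ (abs_nonneg _) (abs_real_inner_le_norm _ _) 2

theorem norm_sum_smul_inner_le {f : ι → E} {g : ι → F} {c : ι → ℝ} {α β C : ℝ}
    (hα : 0 ≤ α) (hβ : 0 ≤ β) (hC : 0 ≤ C)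
    (hf : ∀ a : ι → ℝ, ‖∑ i ∈ s, a i • f i‖ ^ 2 ≤ α ^ 2 * ∑ i ∈ s, a i ^ 2)
    (hc : ∀ i ∈ s, |c i| ≤ C) (w : F) (hg : ∑ i ∈ s, ⟪g i, w⟫ ^ 2 ≤ β ^ 2 * ‖w‖ ^ 2) :
    ‖∑ i ∈ s, (c i * ⟪g i, w⟫) • f i‖ ≤ C * (α * β) * ‖w‖ := by
  refine le_of_sq_le_sq ?_ (by positivity)
  calc ‖∑ i ∈ s, (c i * ⟪g i, w⟫) • f i‖ ^ 2
      ≤ α ^ 2 * ∑ i ∈ s, (c i * ⟪g i, w⟫) ^ 2 := hf _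
    _ ≤ α ^ 2 * ∑ i ∈ s, C ^ 2 * ⟪g i, w⟫ ^ 2 := by
        gcongr with i hi
        rw [mul_pow]
        exact mul_le_mul_of_nonneg_right (sq_le_sq.mpr ((hc i hi).trans (le_abs_self C)))
          (sq_nonneg _)
    _ = α ^ 2 * (C ^ 2 * ∑ i ∈ s, ⟪g i, w⟫ ^ 2) := by rw [← mul_sum]
    _ ≤ α ^ 2 * (C ^ 2 * (β ^ 2 * ‖w‖ ^ 2)) := by gcongr
    _ = (C * (α * β) * ‖w‖) ^ 2 := by ring

end RankOneSums

section Perturbation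

variable {ι κ E F : Type*} [NormedAddCommGroup E] [InnerProductSpace ℝ E]
  [NormedAddCommGroup F] [InnerProductSpace ℝ F] [Fintype ι] [DecidableEq ι] [Fintype κ]

theorem sum_sub_sum_perturbed_eq (e : κ ↪ ι) (z : ι → ℝ) (Y : ι → E) (X : ι → F)
    (V : κ → E) (U : κ → F) (w : F) :
    ∑ i, (z i * ⟪X i, w⟫) • Y i - ∑ j, (z (e j) * ⟪U j, w⟫) • V j =
      ∑ i ∈ (univ.map e)ᶜ, (z i * ⟪X i, w⟫) • Y i +
        ∑ j, (z (e j) * ⟪X (e j), w⟫) • (Y (e j) - V j) +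
        ∑ j, (z (e j) * ⟪X (e j) - U j, w⟫) • V j := by
  rw [← sum_add_sum_compl (univ.map e), sum_map]
  simp only [inner_sub_left, mul_sub, smul_sub, sub_smul, sum_sub_distrib]
  abel

theorem norm_sum_sub_sum_perturbed_le (e : κ ↪ ι) {z : ι → ℝ} {Y : ι → E} {X : ι → F}
    {V : κ → E} {U : κ → F} {τ z₁ ρ : ℝ}
    (hY : Orthonormal ℝ Y) (hX : Orthonormal ℝ X) (hV : Orthonormal ℝ V)
    (hτ : 0 ≤ τ) (hz₁ : 0 ≤ z₁) (hρ : 0 ≤ ρ)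
    (hz_head : ∀ j, |z (e j)| ≤ z₁) (hz_tail : ∀ i ∉ univ.map e, |z i| ≤ τ)
    (hYV : ∑ j, ‖Y (e j) - V j‖ ^ 2 ≤ ρ ^ 2) (hXU : ∑ j, ‖X (e j) - U j‖ ^ 2 ≤ ρ ^ 2)
    (w : F) :
    ‖∑ i, (z i * ⟪X i, w⟫) • Y i - ∑ j, (z (e j) * ⟪U j, w⟫) • V j‖ ≤
      (τ + 2 * z₁ * ρ) * ‖w‖ := by
  have hXe : Orthonormal ℝ (X ∘ e) := hX.comp e e.injective
  rw [sum_sub_sum_perturbed_eq]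
  calc _ ≤ τ * (1 * 1) * ‖w‖ + z₁ * (ρ * 1) * ‖w‖ + z₁ * (1 * ρ) * ‖w‖ := by
        refine (norm_add₃_le ..).trans (add_le_add_three ?_ ?_ ?_)
        · refine norm_sum_smul_inner_le zero_le_one zero_le_one hτ (fun a => ?_)
            (fun i hi => hz_tail i (mem_compl.mp hi)) w ?_
          · rw [hY.norm_sum_smul_sq, one_pow, one_mul]
          · rw [one_pow, one_mul]
            exact hX.sum_inner_sq_le w
        · refine norm_sum_smul_inner_le hρ zero_le_one hz₁ (fun a => ?_)
            (fun j _ => hz_head j) w ?_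
          · exact (norm_sum_smul_sq_le _ a).trans (by gcongr)
          · rw [one_pow, one_mul]
            exact hXe.sum_inner_sq_le w
        · refine norm_sum_smul_inner_le zero_le_one hρ hz₁ (fun a => ?_)
            (fun j _ => hz_head j) w ?_
          · rw [hV.norm_sum_smul_sq, one_pow, one_mul]
          · exact (sum_inner_sq_le _ w).trans (by gcongr)
    _ = (τ + 2 * z₁ * ρ) * ‖w‖ := by ring

end Perturbation

section Matrices

variable {m n : Type*} [Fintype n]

theorem orthonormal_toLp_of_sum_mul_eq_ite {ι : Type*} [DecidableEq ι] {f : ι → n → ℝ}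
    (h : ∀ i j, ∑ p, f i p * f j p = if i = j then (1 : ℝ) else 0) :
    Orthonormal ℝ fun i => toLp 2 (f i) := by
  rw [orthonormal_iff_ite]
  intro i j
  rw [EuclideanSpace.inner_toLp_toLp, ← h, dotProduct]
  simp only [star_trivial, mul_comm]

theorem toLp_sum_smul_vecMulVec_mulVec {ι : Type*} (s : Finset ι) (c : ι → ℝ)
    (a : ι → m → ℝ) (b : ι → n → ℝ) (w : EuclideanSpace ℝ n) :
    toLp 2 ((∑ i ∈ s, c i • Matrix.vecMulVec (a i) (b i)) *ᵥ ofLp w) =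
      ∑ i ∈ s, (c i * ⟪toLp 2 (b i), w⟫) • toLp 2 (a i) := by
  simp only [Matrix.sum_mulVec, Matrix.smul_mulVec, Matrix.vecMulVec_mulVec, toLp_sum,
    toLp_smul, op_smul_eq_smul, smul_smul, EuclideanSpace.inner_eq_star_dotProduct, star_trivial,
    dotProduct_comm (ofLp w)]

end Matrices

theorem euclNorm_eq_norm_toLp {m : ℕ} (v : Fin m → ℝ) : euclNorm v = ‖toLp 2 v‖ := by
  rw [euclNorm, EuclideanSpace.norm_eq]
  simp

theorem specNorm_le_of_forall_norm_mulVec_le {m n : ℕ} (M : Matrix (Fin m) (Fin n) ℝ) {K : ℝ}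
    (hK : 0 ≤ K) (h : ∀ w : EuclideanSpace ℝ (Fin n), ‖toLp 2 (M *ᵥ ofLp w)‖ ≤ K * ‖w‖) :
    specNorm M ≤ K :=
  ContinuousLinearMap.opNorm_le_bound _ hK h

theorem stmt17_general {m n k : ℕ} (A : Matrix (Fin m) (Fin n) ℝ)
    (hp : 0 < min m n) (hk : k ≤ min m n)
    (z : Fin (min m n) → ℝ)
    (y : Fin (min m n) → Fin m → ℝ) (x : Fin (min m n) → Fin n → ℝ)
    (hy : ∀ i j, ∑ p, y i p * y j p = if i = j then (1:ℝ) else 0)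
    (hx : ∀ i j, ∑ p, x i p * x j p = if i = j then (1:ℝ) else 0)
    (hz0 : ∀ i, 0 ≤ z i) (hzm : ∀ i j, i ≤ j → z j ≤ z i)
    (hA : A = ∑ i, z i • Matrix.vecMulVec (y i) (x i))
    (ρ : ℝ) (hρ : 0 ≤ ρ)
    (v : Fin k → Fin m → ℝ) (u : Fin k → Fin n → ℝ)
    (hv : ∀ i j, ∑ p, v i p * v j p = if i = j then (1:ℝ) else 0)
    (hyv : ∑ i, euclNorm (y (Fin.castLE hk i) - v i) ^ 2 ≤ ρ ^ 2)
    (hxu : ∑ i, euclNorm (x (Fin.castLE hk i) - u i) ^ 2 ≤ ρ ^ 2) :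
    specNorm (A - ∑ i : Fin k, z (Fin.castLE hk i) • Matrix.vecMulVec (v i) (u i)) ≤
      (if h : k < min m n then z ⟨k, h⟩ else 0) + z ⟨0, hp⟩ * (2 * ρ + ρ ^ 2) := by
  set τ := if h : k < min m n then z ⟨k, h⟩ else 0
  have hτ : 0 ≤ τ := by
    unfold τ
    split_ifs
    exacts [hz0 _, le_rfl]
  have hz_head : ∀ j, |z (Fin.castLEEmb hk j)| ≤ z ⟨0, hp⟩ := fun j => by
    rw [abs_of_nonneg (hz0 _)]
    exact hzm _ _ (Nat.zero_le _)
  have hz_tail : ∀ i ∉ Finset.univ.map (Fin.castLEEmb hk), |z i| ≤ τ := by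
    intro i hi
    have hki : k ≤ i := by
      by_contra! hik
      exact hi (Finset.mem_map.mpr ⟨⟨i, hik⟩, Finset.mem_univ _, rfl⟩)
    rw [abs_of_nonneg (hz0 _)]
    simp only [τ, dif_pos (hki.trans_lt i.isLt)]
    exact hzm _ _ hki
  refine specNorm_le_of_forall_norm_mulVec_le _ (add_nonneg hτ (mul_nonneg (hz0 _) (by positivity))) fun w => ?_
  rw [Matrix.sub_mulVec, toLp_sub, hA, toLp_sum_smul_vecMulVec_mulVec,
    toLp_sum_smul_vecMulVec_mulVec]
  calc _ ≤ (τ + 2 * z ⟨0, hp⟩ * ρ) * ‖w‖ :=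
        norm_sum_sub_sum_perturbed_le (Fin.castLEEmb hk)
          (orthonormal_toLp_of_sum_mul_eq_ite hy) (orthonormal_toLp_of_sum_mul_eq_ite hx)
          (orthonormal_toLp_of_sum_mul_eq_ite hv) hτ (hz0 _) hρ hz_head hz_tail
          (by simpa [euclNorm_eq_norm_toLp] using hyv) (by simpa [euclNorm_eq_norm_toLp] using hxu) w
    _ ≤ _ := by
        have := mul_nonneg (hz0 ⟨0, hp⟩) (sq_nonneg ρ)
        exact mul_le_mul_of_nonneg_right (by linarith) (norm_nonneg w)

/-- Structure recognition decomposition: replacing the top `k` singular vector pairs of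
`A = Σ z_i y_i x_iᵀ` by nearby orthonormal systems `v_i`, `u_i` (within total squared
error `ρ²` on each side) yields `B = Σ_{i<k} z_i v_i u_iᵀ` with
`‖A − B‖ ≤ z_{k+1} + z₁ (2ρ + ρ²)`. -/
theorem stmt17 {m n k : ℕ} (A : Matrix (Fin m) (Fin n) ℝ)
    (hp : 0 < min m n) (hk : k ≤ min m n)
    (z : Fin (min m n) → ℝ)
    (y : Fin (min m n) → Fin m → ℝ) (x : Fin (min m n) → Fin n → ℝ)
    (hy : ∀ i j, ∑ p, y i p * y j p = if i = j then (1:ℝ) else 0)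
    (hx : ∀ i j, ∑ p, x i p * x j p = if i = j then (1:ℝ) else 0)
    (hz0 : ∀ i, 0 ≤ z i) (hzm : ∀ i j, i ≤ j → z j ≤ z i)
    (hA : A = ∑ i, z i • Matrix.vecMulVec (y i) (x i))
    (ρ : ℝ) (hρ : 0 ≤ ρ)
    (v : Fin k → Fin m → ℝ) (u : Fin k → Fin n → ℝ)
    (hv : ∀ i j, ∑ p, v i p * v j p = if i = j then (1:ℝ) else 0)
    (hu : ∀ i j, ∑ p, u i p * u j p = if i = j then (1:ℝ) else 0)
    (hyv : ∑ i, euclNorm (y (Fin.castLE hk i) - v i) ^ 2 ≤ ρ ^ 2)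
    (hxu : ∑ i, euclNorm (x (Fin.castLE hk i) - u i) ^ 2 ≤ ρ ^ 2) :
    specNorm (A - ∑ i : Fin k, z (Fin.castLE hk i) • Matrix.vecMulVec (v i) (u i)) ≤
      (if h : k < min m n then z ⟨k, h⟩ else 0) + z ⟨0, hp⟩ * (2 * ρ + ρ ^ 2) :=
  stmt17_general A hp hk z y x hy hx hz0 hzm hA ρ hρ v u hv hyv hxu
end
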